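/- arXiv:math/9804081 — 3 statements merged into one kernel-verified Lean document; each statement's English description precedes it below -/
import Mathlib

section
/- For every natural number r ≥ 0, the residue classes of the monomials α^a·β^b with a + b < r form a ℂ-vector-space basis of F̄_r = ℂ[α,β]/J̄_r; in particular dim_ℂ F̄_r = binom(r+1, 2) = r(r+1)/2. -/
/-!
Write `α = X 0`, `β = X 1`, `Wb i = β + (-1) ^ i * 8`, so that `R̄²_(r+1) = Wb (r + 1) * R̄¹_r`.

Spanning: for `m ≤ r` the elements `Ub r m = (∏_{m < i ≤ r} Wb i) * R̄¹_m` lie in `J̄_r`, by a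
descending induction on `m` from `Ub r r = R̄¹_r` and `Ub r (r - 1) = R̄²_r` through the
recursion of `R̄¹`, in which the coefficient `(m + 1) ^ 2` is invertible. Their leading forms
`α ^ m * β ^ (r - m)` are all monomials of degree `r`, so every monomial of degree `≥ r` reduces
modulo `J̄_r` to lower degree.

Independence: no nonzero `p ∈ J̄_r` has degree `< r`. Induct on `r` and write
`p = f R̄¹_(r+1) + g R̄²_(r+1)`. The substitution `β ↦ -(-1) ^ (r + 1) * 8` kills `R̄²_(r+1)` and
keeps the leading form `α ^ (r + 1)` of `R̄¹_(r+1)`, so by degree it kills `f`. Hence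
`Wb (r + 1)` divides `f`, and `p = Wb (r + 1) * (f₁ R̄¹_(r+1) + g R̄¹_r)` with the second factor in
`J̄_r` and of degree `< r`.
-/

open MvPolynomial

/-- The pair (R̄¹_r, R̄²_r) of polynomials in ℂ[α,β] (α = X 0, β = X 1), defined by
R̄¹_0 = 1, R̄²_0 = 0 and the recursion R̄¹_{r+1} = α·R̄¹_r + r²·R̄²_r,
R̄²_{r+1} = (β + (−1)^{r+1}·8)·R̄¹_r. -/
noncomputable def Rb : ℕ → MvPolynomial (Fin 2) ℂ × MvPolynomial (Fin 2) ℂ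
  | 0 => (1, 0)
  | (r + 1) =>
      (X 0 * (Rb r).1 + C ((r : ℂ) ^ 2) * (Rb r).2,
       (X 1 + C ((-1 : ℂ) ^ (r + 1) * 8)) * (Rb r).1)

/-- The ideal J̄_r = (R̄¹_r, R̄²_r) ⊆ ℂ[α,β]. -/
noncomputable def Jb (r : ℕ) : Ideal (MvPolynomial (Fin 2) ℂ) :=
  Ideal.span {(Rb r).1, (Rb r).2}

namespace MvPolynomial

section TotalDegreeLT

variable {σ R : Type*} [CommSemiring R] {m n k : ℕ} {p q : MvPolynomial σ R}

/-- Defined through supports: `p.totalDegree < n` would exclude `p = 0` for `n = 0`. -/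
noncomputable def totalDegreeLT (n : ℕ) : Submodule R (MvPolynomial σ R) :=
  restrictSupport R {d | d.degree < n}

theorem eq_zero_of_mem_totalDegreeLT_zero (hp : p ∈ totalDegreeLT 0) : p = 0 :=
  support_eq_empty.1 <| Finset.eq_empty_of_forall_notMem fun _ hd => Nat.not_lt_zero _ (hp hd)

theorem mem_totalDegreeLT_of_totalDegree_lt (h : p.totalDegree < n) : p ∈ totalDegreeLT n :=
  fun _ hd => (le_totalDegree hd).trans_lt h

theorem totalDegree_lt_of_mem_totalDegreeLT (hn : 0 < n) (hp : p ∈ totalDegreeLT n) :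
    p.totalDegree < n :=
  (Finset.sup_lt_iff hn).2 hp

theorem totalDegree_le_of_mem_totalDegreeLT (hp : p ∈ totalDegreeLT n) : p.totalDegree ≤ n :=
  Finset.sup_le fun _ hd => (hp hd).le

theorem totalDegreeLT_mono (h : m ≤ n) :
    (totalDegreeLT m : Submodule R (MvPolynomial σ R)) ≤ totalDegreeLT n :=
  restrictSupport_mono R fun _ hd => lt_of_lt_of_le hd h

theorem mul_mem_totalDegreeLT (hp : p ∈ totalDegreeLT m) (hq : q.totalDegree ≤ k) :
    p * q ∈ totalDegreeLT (m + k) := by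
  classical
  intro d hd
  obtain ⟨a, ha, b, hb, rfl⟩ := Finset.mem_add.1 (support_mul p q hd)
  change (a + b).degree < m + k
  rw [map_add]
  exact Nat.add_lt_add_of_lt_of_le (hp ha) ((le_totalDegree hb).trans hq)

theorem aeval_mem_totalDegreeLT {τ : Type*} (g : σ → MvPolynomial τ R)
    (hg : ∀ i, (g i).totalDegree ≤ 1) (hp : p ∈ totalDegreeLT n) :
    aeval g p ∈ totalDegreeLT n := by
  suffices totalDegreeLT n ≤ (totalDegreeLT n).comap (aeval g).toLinearMap from this hp
  rw [totalDegreeLT, restrictSupport_eq_span, Submodule.span_le]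
  rintro _ ⟨d, hd, rfl⟩
  refine mem_totalDegreeLT_of_totalDegree_lt (lt_of_le_of_lt ?_ hd)
  rw [AlgHom.toLinearMap_apply, aeval_monomial, map_one, one_mul]
  calc (d.prod fun i k => g i ^ k).totalDegree
      ≤ ∑ i ∈ d.support, (g i ^ d i).totalDegree := totalDegree_finsetProd _ _
    _ ≤ ∑ i ∈ d.support, d i := Finset.sum_le_sum fun i _ =>
        (totalDegree_pow _ _).trans (by simpa using Nat.mul_le_mul_left (d i) (hg i))
    _ = d.degree := rfl

end TotalDegreeLT

section CommRing

variable {σ R : Type*} [CommRing R] {m n : ℕ} {p q μ ν : MvPolynomial σ R}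

theorem mul_sub_mul_mem_totalDegreeLT (hp : p - μ ∈ totalDegreeLT m)
    (hq : q - ν ∈ totalDegreeLT n) (hμ : μ.totalDegree ≤ m) (hν : ν.totalDegree ≤ n) :
    p * q - μ * ν ∈ totalDegreeLT (m + n) := by
  have hq' : q.totalDegree ≤ n := calc
    q.totalDegree = (q - ν + ν).totalDegree := by rw [sub_add_cancel]
    _ ≤ n := (totalDegree_add _ _).trans (max_le (totalDegree_le_of_mem_totalDegreeLT hq) hν)
  rw [show p * q - μ * ν = (p - μ) * q + (q - ν) * μ by ring]
  exact add_mem (mul_mem_totalDegreeLT hp hq')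
    (totalDegreeLT_mono (add_comm n m).le (mul_mem_totalDegreeLT hq hμ))

theorem totalDegree_eq_of_sub_mem_totalDegreeLT (h : p - μ ∈ totalDegreeLT n)
    (hμ : μ.totalDegree = n) : p.totalDegree = n := by
  rcases n.eq_zero_or_pos with rfl | hn
  · rwa [sub_eq_zero.1 (eq_zero_of_mem_totalDegreeLT_zero h)]
  · rw [← sub_add_cancel p μ, totalDegree_add_eq_right_of_totalDegree_lt, hμ]
    exact hμ ▸ totalDegree_lt_of_mem_totalDegreeLT hn h

theorem X_sub_C_dvd_sub_aeval_update [DecidableEq σ] (i : σ) (c : R) (f : MvPolynomial σ R) :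
    X i - C c ∣ f - aeval (Function.update X i (C c)) f := by
  rw [← Ideal.mem_span_singleton, ← Ideal.Quotient.eq]
  let π := Ideal.Quotient.mkₐ R (Ideal.span {X i - C c})
  change π f = π (aeval _ f)
  rw [← AlgHom.comp_apply]
  congr 1
  refine algHom_ext fun j => ?_
  rw [AlgHom.comp_apply, aeval_X]
  rcases eq_or_ne j i with rfl | hj
  · rw [Function.update_self]
    exact Ideal.Quotient.eq.2 (Ideal.mem_span_singleton_self _)
  · rw [Function.update_of_ne hj]

end CommRing

section IsDomain

variable {σ R : Type*} [CommRing R] [IsDomain R] {n : ℕ} {p q : MvPolynomial σ R}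

theorem mem_totalDegreeLT_of_X_add_C_mul_mem (i : σ) (a : R)
    (h : (X i + C a) * q ∈ totalDegreeLT (n + 1)) : q ∈ totalDegreeLT n := by
  rcases eq_or_ne q 0 with rfl | hq
  · exact zero_mem _
  have hX : (X i + C a : MvPolynomial σ R).totalDegree = 1 := by
    rw [totalDegree_add_eq_left_of_totalDegree_lt] <;> simp [totalDegree_X]
  have hX₀ : (X i + C a : MvPolynomial σ R) ≠ 0 := fun h0 => by simp [h0] at hX
  have := totalDegree_lt_of_mem_totalDegreeLT n.succ_pos h
  rw [totalDegree_mul_of_isDomain hX₀ hq, hX] at this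
  exact mem_totalDegreeLT_of_totalDegree_lt (by omega)

theorem prod_X_add_C_sub_X_pow_mem_totalDegreeLT {ι : Type*} (i : σ) (a : ι → R)
    (s : Finset ι) :
    ∏ j ∈ s, (X i + C (a j)) - X i ^ s.card ∈ totalDegreeLT s.card := by
  classical
  induction s using Finset.induction_on with
  | empty => simp
  | insert j s hj ih =>
    rw [Finset.prod_insert hj, Finset.card_insert_of_notMem hj, pow_succ, mul_comm (X i + _)]
    refine mul_sub_mul_mem_totalDegreeLT ih ?_ (totalDegree_X_pow _ _).le (totalDegree_X _).le
    rw [add_sub_cancel_left]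
    exact mem_totalDegreeLT_of_totalDegree_lt (by simp)

end IsDomain

end MvPolynomial

open Finset in
theorem Nat.card_subtype_fst_add_snd_lt (r : ℕ) :
    Nat.card {t : ℕ × ℕ // t.1 + t.2 < r} = (r + 1).choose 2 := by
  have e : {t : ℕ × ℕ // t.1 + t.2 < r} ≃ (range r).biUnion HasAntidiagonal.antidiagonal :=
    Equiv.subtypeEquivRight (by simp)
  rw [Nat.card_congr e, Nat.card_eq_finsetCard, card_biUnion fun a _ b _ hab =>
    disjoint_left.2 fun _ ha hb => hab ((mem_antidiagonal.1 ha).symm.trans (mem_antidiagonal.1 hb))]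
  simp only [Nat.card_antidiagonal]
  clear e
  induction r with
  | zero => rfl
  | succ r ih =>
    rw [sum_range_succ, ih, Nat.choose_succ_succ' (r + 1), Nat.choose_one_right, add_comm]

section FinTwo

variable (R : Type*) [CommSemiring R]

theorem linearIndependent_X_pow_mul_X_pow :
    LinearIndependent R fun t : ℕ × ℕ => (X 0 ^ t.1 * X 1 ^ t.2 : MvPolynomial (Fin 2) R) := by
  convert (basisMonomials (Fin 2) R).linearIndependent.comp _ (finTwoArrowEquiv' ℕ).symm.injective
    with t
  simp [monomial_fin_two]

theorem span_X_pow_mul_X_pow_add_lt (r : ℕ) :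
    Submodule.span R (Set.range fun t : {t : ℕ × ℕ // t.1 + t.2 < r} =>
      (X 0 ^ t.1.1 * X 1 ^ t.1.2 : MvPolynomial (Fin 2) R)) = totalDegreeLT r := by
  rw [totalDegreeLT, restrictSupport_eq_span]
  congr 1
  ext p
  constructor
  · rintro ⟨⟨t, ht⟩, rfl⟩
    refine ⟨(finTwoArrowEquiv' ℕ).symm t, ?_, by simp [monomial_fin_two]⟩
    simpa [Finsupp.degree_eq_sum, Fin.sum_univ_two] using ht
  · rintro ⟨d, hd, rfl⟩
    refine ⟨⟨(d 0, d 1), ?_⟩, by simp [monomial_fin_two]⟩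
    simpa [Finsupp.degree_eq_sum, Fin.sum_univ_two] using hd

end FinTwo

noncomputable def Wb (i : ℕ) : MvPolynomial (Fin 2) ℂ := X 1 + C ((-1 : ℂ) ^ i * 8)

noncomputable def Ub (r m : ℕ) : MvPolynomial (Fin 2) ℂ :=
  (∏ i ∈ Finset.Ioc m r, Wb i) * (Rb m).1

theorem Rb_fst_succ (r : ℕ) :
    (Rb (r + 1)).1 = X 0 * (Rb r).1 + C ((r : ℂ) ^ 2) * (Rb r).2 := rfl

theorem Rb_snd_succ (r : ℕ) : (Rb (r + 1)).2 = Wb (r + 1) * (Rb r).1 := rfl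

theorem Rb_fst_mem_Jb (r : ℕ) : (Rb r).1 ∈ Jb r := Ideal.subset_span (Set.mem_insert _ _)

theorem Rb_snd_mem_Jb (r : ℕ) : (Rb r).2 ∈ Jb r :=
  Ideal.subset_span (Set.mem_insert_of_mem _ rfl)

theorem Rb_fst_succ_mem_Jb (r : ℕ) : (Rb (r + 1)).1 ∈ Jb r := by
  rw [Rb_fst_succ]
  exact add_mem (Ideal.mul_mem_left _ _ (Rb_fst_mem_Jb r))
    (Ideal.mul_mem_left _ _ (Rb_snd_mem_Jb r))

theorem totalDegree_Wb (i : ℕ) : (Wb i).totalDegree = 1 := by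
  rw [Wb, totalDegree_add_eq_left_of_totalDegree_lt, totalDegree_X]
  rw [totalDegree_C, totalDegree_X]
  exact one_pos

theorem totalDegree_Rb_le (m : ℕ) : (Rb m).1.totalDegree ≤ m ∧ (Rb m).2.totalDegree ≤ m := by
  induction m with
  | zero => simp [Rb]
  | succ m ih =>
    rw [Rb_fst_succ, Rb_snd_succ]
    refine ⟨(totalDegree_add _ _).trans (max_le ?_ ?_), (totalDegree_mul _ _).trans ?_⟩
    · exact (totalDegree_mul _ _).trans (by rw [totalDegree_X]; omega)
    · exact (totalDegree_mul _ _).trans (by rw [totalDegree_C]; omega)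
    · rw [totalDegree_Wb]; omega

theorem Rb_fst_sub_X_pow_mem_totalDegreeLT (m : ℕ) :
    (Rb m).1 - X 0 ^ m ∈ totalDegreeLT m := by
  induction m with
  | zero => simp [Rb]
  | succ m ih =>
    rw [Rb_fst_succ, show X 0 * (Rb m).1 + C ((m : ℂ) ^ 2) * (Rb m).2 - X 0 ^ (m + 1)
      = ((Rb m).1 - X 0 ^ m) * X 0 + C ((m : ℂ) ^ 2) * (Rb m).2 by ring]
    refine add_mem (mul_mem_totalDegreeLT ih (totalDegree_X _).le) ?_
    refine mem_totalDegreeLT_of_totalDegree_lt ((totalDegree_mul _ _).trans_lt ?_)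
    rw [totalDegree_C, zero_add]
    exact Nat.lt_succ_of_le (totalDegree_Rb_le m).2

theorem C_mul_Ub {r m : ℕ} (h : m + 2 ≤ r) :
    C (((m + 1 : ℕ) : ℂ) ^ 2) * Ub r m = Wb (m + 2) * Ub r (m + 2) - X 0 * Ub r (m + 1) := by
  have hprod : ∀ n < r,
      ∏ i ∈ Finset.Ioc n r, Wb i = Wb (n + 1) * ∏ i ∈ Finset.Ioc (n + 1) r, Wb i := fun n hn => by
    rw [← Finset.prod_Ioc_consecutive _ n.le_succ hn, Nat.Ioc_succ_singleton,
      Finset.prod_singleton]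
  rw [Ub, Ub, Ub, hprod m (by omega), hprod (m + 1) (by omega), Rb_fst_succ (m + 1),
    Rb_snd_succ m]
  ring

theorem Ub_mem_Jb {r m : ℕ} (h : m ≤ r) : Ub r m ∈ Jb r := by
  have hself : ∀ r, Ub r r = (Rb r).1 := fun r => by
    rw [Ub, Finset.Ioc_self, Finset.prod_empty, one_mul]
  suffices ∀ k m, m + k + 1 = r → Ub r m ∈ Jb r ∧ Ub r (m + 1) ∈ Jb r by
    rcases h.eq_or_lt with rfl | hlt
    · exact hself m ▸ Rb_fst_mem_Jb m
    · exact (this (r - m - 1) m (by omega)).1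
  intro k
  induction k with
  | zero =>
    rintro m rfl
    refine ⟨?_, hself _ ▸ Rb_fst_mem_Jb _⟩
    rw [Ub, Nat.Ioc_succ_singleton, Finset.prod_singleton, ← Rb_snd_succ]
    exact Rb_snd_mem_Jb _
  | succ k ih =>
    intro m hm
    obtain ⟨h₁, h₂⟩ := ih (m + 1) (by omega)
    refine ⟨?_, h₁⟩
    have hunit : IsUnit (C (((m + 1 : ℕ) : ℂ) ^ 2) : MvPolynomial (Fin 2) ℂ) :=
      (isUnit_iff_ne_zero.2 (pow_ne_zero _ (Nat.cast_ne_zero.2 m.succ_ne_zero))).map C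
    rw [← Ideal.unit_mul_mem_iff_mem _ hunit, C_mul_Ub (by omega)]
    exact sub_mem (Ideal.mul_mem_left _ _ h₂) (Ideal.mul_mem_left _ _ h₁)

theorem Ub_sub_mem_totalDegreeLT {r m : ℕ} (h : m ≤ r) :
    Ub r m - X 0 ^ m * X 1 ^ (r - m) ∈ totalDegreeLT r := by
  have hW := prod_X_add_C_sub_X_pow_mem_totalDegreeLT (1 : Fin 2) (fun i => (-1 : ℂ) ^ i * 8)
    (Finset.Ioc m r)
  rw [Nat.card_Ioc] at hW
  have := mul_sub_mul_mem_totalDegreeLT hW (Rb_fst_sub_X_pow_mem_totalDegreeLT m)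
    (totalDegree_X_pow _ _).le (totalDegree_X_pow _ _).le
  rwa [Nat.sub_add_cancel h, mul_comm (X 1 ^ _)] at this

theorem X_pow_mul_X_pow_mem_Jb_sup {r a b : ℕ} (h : r ≤ a + b) :
    X 0 ^ a * X 1 ^ b ∈ (Jb r).restrictScalars ℂ ⊔ totalDegreeLT (a + b) := by
  obtain ⟨m, hma, hmb, hmr⟩ : ∃ m, m ≤ a ∧ r - m ≤ b ∧ m ≤ r :=
    ⟨min a r, min_le_left _ _, by omega, min_le_right _ _⟩
  set ν : MvPolynomial (Fin 2) ℂ := X 0 ^ (a - m) * X 1 ^ (b - (r - m))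
  have hν : ν.totalDegree ≤ (a - m) + (b - (r - m)) :=
    (totalDegree_mul _ _).trans (by rw [totalDegree_X_pow, totalDegree_X_pow])
  have hsplit : X 0 ^ a * X 1 ^ b = ν * Ub r m - (Ub r m - X 0 ^ m * X 1 ^ (r - m)) * ν := by
    rw [← Nat.sub_add_cancel hma, ← Nat.sub_add_cancel hmb]
    simp only [ν, pow_add]
    ring
  rw [hsplit]
  refine Submodule.sub_mem_sup (Ideal.mul_mem_left _ ν (Ub_mem_Jb hmr)) ?_
  exact totalDegreeLT_mono (by omega) (mul_mem_totalDegreeLT (Ub_sub_mem_totalDegreeLT hmr) hν)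

theorem Jb_sup_totalDegreeLT (r : ℕ) : (Jb r).restrictScalars ℂ ⊔ totalDegreeLT r = ⊤ := by
  set S := (Jb r).restrictScalars ℂ ⊔ totalDegreeLT r
  have hS : ∀ n, totalDegreeLT n ≤ S := by
    intro n
    induction n with
    | zero => exact (totalDegreeLT_mono r.zero_le).trans le_sup_right
    | succ n ih =>
      rcases lt_or_ge n r with hn | hn
      · exact (totalDegreeLT_mono hn).trans le_sup_right
      rw [totalDegreeLT, restrictSupport_eq_span, Submodule.span_le]
      rintro _ ⟨d, hd, rfl⟩
      have hdeg : d.degree = d 0 + d 1 := by rw [Finsupp.degree_eq_sum, Fin.sum_univ_two]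
      rcases (Nat.lt_succ_iff.1 hd).lt_or_eq with hd | hd
      · exact ih (mem_totalDegreeLT_of_totalDegree_lt ((totalDegree_monomial_le _ _).trans_lt hd))
      · change monomial d 1 ∈ S
        rw [monomial_fin_two, map_one, one_mul]
        have := X_pow_mul_X_pow_mem_Jb_sup (r := r) (a := d 0) (b := d 1) (by omega)
        rw [← hdeg, hd] at this
        exact sup_le le_sup_left ih this
  exact eq_top_iff.2 fun p _ =>
    hS _ (mem_totalDegreeLT_of_totalDegree_lt p.totalDegree.lt_succ_self)

theorem eq_zero_of_mem_Jb_of_mem_totalDegreeLT {r : ℕ} {p : MvPolynomial (Fin 2) ℂ}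
    (hJ : p ∈ Jb r) (hp : p ∈ totalDegreeLT r) : p = 0 := by
  induction r generalizing p with
  | zero => exact eq_zero_of_mem_totalDegreeLT_zero hp
  | succ r ih =>
    set ε : ℂ := (-1) ^ (r + 1) * 8
    set φ : MvPolynomial (Fin 2) ℂ →ₐ[ℂ] MvPolynomial (Fin 2) ℂ :=
      aeval (Function.update X 1 (C (-ε)))
    have hφ : ∀ i, (Function.update X (1 : Fin 2) (C (-ε)) i).totalDegree ≤ 1 := by
      intro i
      fin_cases i <;> simp [totalDegree_X]
    have hφW : φ (Wb (r + 1)) = 0 := by simp [φ, Wb, ε]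
    have hφR : (φ (Rb (r + 1)).1).totalDegree = r + 1 := by
      refine totalDegree_eq_of_sub_mem_totalDegreeLT (μ := X 0 ^ (r + 1)) ?_
        (totalDegree_X_pow _ _)
      simpa [φ] using
        aeval_mem_totalDegreeLT _ hφ (Rb_fst_sub_X_pow_mem_totalDegreeLT (r + 1))
    obtain ⟨f, g, rfl⟩ := Ideal.mem_span_pair.1 hJ
    rw [Rb_snd_succ] at hp ⊢
    have hφf : φ f = 0 := by
      by_contra hf
      have hR : φ (Rb (r + 1)).1 ≠ 0 := fun h0 => by simp [h0] at hφR
      have hlt :=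
        totalDegree_lt_of_mem_totalDegreeLT r.succ_pos (aeval_mem_totalDegreeLT _ hφ hp)
      rw [map_add, map_mul, map_mul, map_mul, hφW, zero_mul, mul_zero, add_zero,
        totalDegree_mul_of_isDomain hf hR, hφR] at hlt
      omega
    obtain ⟨f₁, rfl⟩ : Wb (r + 1) ∣ f := by
      have := X_sub_C_dvd_sub_aeval_update (1 : Fin 2) (-ε) f
      change X 1 - C (-ε) ∣ f - φ f at this
      rwa [hφf, sub_zero, map_neg, sub_neg_eq_add] at this
    have hfactor : Wb (r + 1) * f₁ * (Rb (r + 1)).1 + g * (Wb (r + 1) * (Rb r).1)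
        = Wb (r + 1) * (f₁ * (Rb (r + 1)).1 + g * (Rb r).1) := by ring
    rw [hfactor] at hp ⊢
    have hJ₁ : f₁ * (Rb (r + 1)).1 + g * (Rb r).1 ∈ Jb r :=
      add_mem (Ideal.mul_mem_left _ _ (Rb_fst_succ_mem_Jb r))
        (Ideal.mul_mem_left _ _ (Rb_fst_mem_Jb r))
    rw [ih hJ₁ (mem_totalDegreeLT_of_X_add_C_mul_mem 1 ε hp), mul_zero]

theorem isCompl_totalDegreeLT_Jb (r : ℕ) :
    IsCompl (totalDegreeLT r) ((Jb r).restrictScalars ℂ) :=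
  ⟨Submodule.disjoint_def.2 fun _ hp hJ => eq_zero_of_mem_Jb_of_mem_totalDegreeLT hJ hp,
    codisjoint_iff.2 (by rw [sup_comm]; exact Jb_sup_totalDegreeLT r)⟩

/-- For every r ≥ 0, the residue classes of the monomials α^a·β^b with a + b < r form a
ℂ-vector-space basis of F̄_r = ℂ[α,β]/J̄_r; in particular
dim_ℂ F̄_r = binom(r+1, 2) = r(r+1)/2. -/
theorem stmt2 (r : ℕ) :
    LinearIndependent ℂ (fun t : {t : ℕ × ℕ // t.1 + t.2 < r} =>
      Ideal.Quotient.mk (Jb r) (X 0 ^ t.1.1 * X 1 ^ t.1.2)) ∧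
    Submodule.span ℂ (Set.range (fun t : {t : ℕ × ℕ // t.1 + t.2 < r} =>
      Ideal.Quotient.mk (Jb r) (X 0 ^ t.1.1 * X 1 ^ t.1.2))) = ⊤ ∧
    Module.finrank ℂ (MvPolynomial (Fin 2) ℂ ⧸ Jb r) = (r + 1).choose 2 ∧
    (r + 1).choose 2 = r * (r + 1) / 2 := by
  set v := fun t : {t : ℕ × ℕ // t.1 + t.2 < r} =>
    (X 0 ^ t.1.1 * X 1 ^ t.1.2 : MvPolynomial (Fin 2) ℂ)
  set π := (Ideal.Quotient.mkₐ ℂ (Jb r)).toLinearMap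
  have hker : LinearMap.ker π = (Jb r).restrictScalars ℂ := by
    ext p
    exact Ideal.Quotient.eq_zero_iff_mem
  have hcompl : IsCompl (Submodule.span ℂ (Set.range v)) (LinearMap.ker π) := by
    rw [span_X_pow_mul_X_pow_add_lt, hker]
    exact isCompl_totalDegreeLT_Jb r
  have hli : LinearIndependent ℂ (π ∘ v) :=
    ((linearIndependent_X_pow_mul_X_pow ℂ).comp _ Subtype.val_injective).map hcompl.disjoint
  have hspan : Submodule.span ℂ (Set.range (π ∘ v)) = ⊤ := by
    rw [Set.range_comp, ← Submodule.map_span,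
      LinearMap.map_eq_top_iff (LinearMap.range_eq_top.2 Ideal.Quotient.mk_surjective)]
    exact hcompl.codisjoint.eq_top
  refine ⟨hli, hspan, ?_, ?_⟩
  · rw [Module.finrank_eq_nat_card_basis (Module.Basis.mk hli hspan.ge),
      Nat.card_subtype_fst_add_snd_lt]
  · rw [Nat.choose_two_right, Nat.add_sub_cancel, Nat.mul_comm]
end

section
/- For every natural number r ≥ 0 one has the inclusions of ideals J̄_{r+1} ⊆ J̄_r and (β + (−1)^{r+1}·8)·J̄_r ⊆ J̄_{r+1} in ℂ[α,β]. -/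
open MvPolynomial

/-- For every r ≥ 0 one has the inclusions of ideals J̄_{r+1} ⊆ J̄_r and
(β + (−1)^{r+1}·8)·J̄_r ⊆ J̄_{r+1} in ℂ[α,β]. -/
theorem stmt4 (r : ℕ) :
    Jb (r + 1) ≤ Jb r ∧
    ∀ p ∈ Jb r, (X 1 + C ((-1 : ℂ) ^ (r + 1) * 8)) * p ∈ Jb (r + 1) := by
  constructor
  · rw [Jb, Ideal.span_le]
    rintro x (rfl | rfl)
    · show X 0 * (Rb r).1 + C ((r : ℂ) ^ 2) * (Rb r).2 ∈ Jb r
      rw [Jb, Ideal.mem_span_pair]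
      exact ⟨X 0, C ((r : ℂ) ^ 2), rfl⟩
    · show (X 1 + C ((-1 : ℂ) ^ (r + 1) * 8)) * (Rb r).1 ∈ Jb r
      rw [Jb, Ideal.mem_span_pair]
      exact ⟨X 1 + C ((-1 : ℂ) ^ (r + 1) * 8), 0, by ring⟩
  · intro p hp
    rw [Jb, Ideal.mem_span_pair] at hp
    obtain ⟨u, v, rfl⟩ := hp
    rw [Jb, Ideal.mem_span_pair]
    show ∃ a b, a * (X 0 * (Rb r).1 + C ((r : ℂ) ^ 2) * (Rb r).2)
        + b * ((X 1 + C ((-1 : ℂ) ^ (r + 1) * 8)) * (Rb r).1)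
        = (X 1 + C ((-1 : ℂ) ^ (r + 1) * 8)) * (u * (Rb r).1 + v * (Rb r).2)
    rcases Nat.eq_zero_or_pos r with rfl | hr
    · refine ⟨0, u, ?_⟩
      simp only [Rb]
      ring
    · have h2 : ((r : ℂ) ^ 2) ≠ 0 := pow_ne_zero 2 (by exact_mod_cast hr.ne')
      refine ⟨C ((r : ℂ) ^ 2)⁻¹ * v * (X 1 + C ((-1 : ℂ) ^ (r + 1) * 8)),
        u - C ((r : ℂ) ^ 2)⁻¹ * v * X 0, ?_⟩
      have hC : C ((r : ℂ) ^ 2)⁻¹ * C ((r : ℂ) ^ 2) = (1 : MvPolynomial (Fin 2) ℂ) := by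
        rw [← C_mul, inv_mul_cancel₀ h2, C_1]
      linear_combination (v * (Rb r).2 * (X 1 + C ((-1:ℂ)^(r+1) * 8))) * hC
end

section
/- For every natural number r ≥ 0, as a ℂ[α,β]-module the quotient J̄_r/J̄_{r+1} (well defined since J̄_{r+1} ⊆ J̄_r) is isomorphic to the direct sum ⊕_{i} M_{r+1,i}, where i ranges over the integers with −r ≤ i ≤ r and i ≡ r (mod 2), and where M_{r+1,i} = ℂ[α,β]/(α − 4i·√−1, β − 8) if r is even and M_{r+1,i} = ℂ[α,β]/(α − 4i, β + 8) if r is odd. In particular each M_{r+1,i} is one-dimensional over ℂ and dim_ℂ (J̄_r/J̄_{r+1}) = r + 1. -/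
open MvPolynomial DirectSum

/-- The ℂ[α,β]-module M_{r+1,i} = ℂ[α,β]/(α − 4i·√−1, β − 8) if r is even, resp.
ℂ[α,β]/(α − 4i, β + 8) if r is odd. -/
abbrev Mmod (r : ℕ) (i : ℤ) : Type :=
  MvPolynomial (Fin 2) ℂ ⧸ Ideal.span
    {X 0 - C (if r % 2 = 0 then 4 * (i : ℂ) * Complex.I else 4 * (i : ℂ)),
     X 1 - C (if r % 2 = 0 then (8 : ℂ) else -8)}

/-- The quotient J̄_r/J̄_{r+1}, realized (since J̄_{r+1} ⊆ J̄_r) as the image of the ideal J̄_r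
in F̄_{r+1} = ℂ[α,β]/J̄_{r+1}, viewed as a ℂ[α,β]-module. -/
noncomputable def JbQuot (r : ℕ) : Submodule (MvPolynomial (Fin 2) ℂ)
    (MvPolynomial (Fin 2) ℂ ⧸ Jb (r + 1)) :=
  Submodule.restrictScalars (MvPolynomial (Fin 2) ℂ)
    ((Jb r).map (Ideal.Quotient.mk (Jb (r + 1))))

open scoped Polynomial

/-!
Write `P r = (Rb r).1`. The recursion gives `(Rb (r+1)).2 = (β - β₀ r)·P r` with
`β₀ r = (-1)^r·8`, and `(Rb r).2 ∈ (P r, P (r+1))`, so `J̄_r/J̄_{r+1}` is the cyclic module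
generated by the class of `P r`. Consecutive `P r` are coprime (a common prime factor would have
to be some `β - β₀ k`, which does not divide `P (k+1)`), hence the annihilator of that class is
`(P (r+1), β - β₀ r)`. Setting `β = β₀ r` kills every other correction term of the recursion, so
`P (r+1)(α, β₀ r) = ∏ᵢ (α - α₀ r i)` with `r + 1` distinct roots `α₀ r i = 4i` or `4i√−1`. The
annihilator is therefore the intersection of the pairwise comaximal ideals `(α - α₀ r i, β - β₀ r)`,
and the Chinese remainder theorem splits the quotient into the one-dimensional `M_{r+1,i}`.
-/

local notation "ℂ[α,β]" => MvPolynomial (Fin 2) ℂ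

theorem mul_mem_span_pair_mul_iff {R : Type*} [CommRing R] [DecompositionMonoid R]
    {p q w a : R} (h : IsRelPrime p q) :
    a * q ∈ Ideal.span {p, w * q} ↔ a ∈ Ideal.span {p, w} := by
  simp only [Ideal.mem_span_pair]
  constructor
  · rintro ⟨x, y, hxy⟩
    obtain ⟨t, ht⟩ : p ∣ a - y * w :=
      h.dvd_of_dvd_mul_right ⟨x, by linear_combination -hxy⟩
    exact ⟨t, y, by linear_combination -ht⟩
  · rintro ⟨x, y, hxy⟩
    exact ⟨x * q, y, by linear_combination q * hxy⟩

theorem Ideal.comap_span_singleton_apply {A B F : Type*} [CommRing A] [CommRing B] [FunLike F A B]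
    [RingHomClass F A B] {f : F} (hf : Function.Surjective f) (a : A) :
    (Ideal.span {f a}).comap f = Ideal.span {a} ⊔ RingHom.ker f := by
  rw [← Ideal.comap_map_of_surjective' f hf, Ideal.map_span, Set.image_singleton]

theorem MvPolynomial.sub_aeval_mem_span {σ R : Type*} [CommRing R] (g : σ → MvPolynomial σ R)
    (f : MvPolynomial σ R) : f - aeval g f ∈ Ideal.span (Set.range fun i => X i - g i) := by
  set I := Ideal.span (Set.range fun i => X i - g i)
  have h : (Ideal.Quotient.mkₐ R I).comp (aeval g) = Ideal.Quotient.mkₐ R I := by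
    refine algHom_ext fun i => ?_
    have hi : X i - g i ∈ I := Ideal.subset_span ⟨i, rfl⟩
    simpa [eq_comm] using Ideal.Quotient.eq.2 hi
  exact Ideal.Quotient.eq.1 (DFunLike.congr_fun h f).symm

noncomputable def Ideal.quotientInfLinearEquivPiQuotient {R ι : Type*} [CommRing R] [Finite ι]
    (I : ι → Ideal R) (hI : Pairwise (Function.onFun IsCoprime I)) :
    (R ⧸ ⨅ i, I i) ≃ₗ[R] Π i, R ⧸ I i :=
  Submodule.quotEquivOfEq _ _ (by simp [LinearMap.ker_pi]) ≪≫ₗ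
    LinearMap.quotKerEquivOfSurjective _ (Ideal.pi_mkQ_surjective hI)

section Specialization

noncomputable def substβ (b : ℂ) : ℂ[α,β] →ₐ[ℂ] ℂ[X] :=
  aeval ![Polynomial.X, Polynomial.C b]

noncomputable def embα : ℂ[X] →ₐ[ℂ] ℂ[α,β] :=
  Polynomial.aeval (X 0)

variable {b : ℂ}

@[simp] theorem substβ_X_zero : substβ b (X 0) = Polynomial.X := by simp [substβ]
@[simp] theorem substβ_X_one : substβ b (X 1) = Polynomial.C b := by simp [substβ]
@[simp] theorem substβ_C (z : ℂ) : substβ b (C z) = Polynomial.C z := by simp [substβ]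

theorem substβ_embα (p : ℂ[X]) : substβ b (embα p) = p := by
  have : (substβ b).comp embα = AlgHom.id ℂ ℂ[X] := Polynomial.algHom_ext (by simp [embα])
  exact DFunLike.congr_fun this p

theorem substβ_surjective (b : ℂ) : Function.Surjective (substβ b) :=
  fun p => ⟨embα p, substβ_embα p⟩

theorem embα_substβ (f : ℂ[α,β]) : embα (substβ b f) = aeval ![X 0, C b] f := by
  have : embα.comp (substβ b) = aeval ![X 0, C b] :=
    algHom_ext fun i => by fin_cases i <;> simp [embα]
  exact DFunLike.congr_fun this f

theorem ker_substβ (b : ℂ) : RingHom.ker (substβ b) = Ideal.span {X 1 - C b} := by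
  refine le_antisymm (fun f hf => ?_) ?_
  · have hf' := sub_aeval_mem_span ![X 0, C b] f
    rw [← embα_substβ, RingHom.mem_ker.1 hf, map_zero, sub_zero] at hf'
    refine Ideal.span_le.2 ?_ hf'
    rintro _ ⟨i, rfl⟩
    fin_cases i <;> simp
  · simp [Ideal.span_le, RingHom.mem_ker]

theorem prime_X_one_sub_C (b : ℂ) : Prime (X 1 - C b : ℂ[α,β]) := by
  have hne : (X 1 - C b : ℂ[α,β]) ≠ 0 := fun h => by
    simpa using congrArg (substβ (b + 1)) h
  rw [← Ideal.span_singleton_prime hne, ← ker_substβ]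
  exact RingHom.ker_isPrime _

noncomputable def pointIdeal (a b : ℂ) : Ideal ℂ[α,β] := Ideal.span {X 0 - C a, X 1 - C b}

theorem pointIdeal_eq_comap (a b : ℂ) :
    pointIdeal a b = (Ideal.span {Polynomial.X - Polynomial.C a}).comap (substβ b) := by
  have h : Polynomial.X - Polynomial.C a = substβ b (X 0 - C a) := by simp
  rw [h, Ideal.comap_span_singleton_apply (substβ_surjective b), ker_substβ, pointIdeal,
    Ideal.span_insert]

noncomputable def evalPoint (a b : ℂ) : ℂ[α,β] →ₐ[ℂ] ℂ :=
  (Polynomial.aeval a).comp (substβ b)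

theorem ker_evalPoint (a b : ℂ) : RingHom.ker (evalPoint a b) = pointIdeal a b := by
  ext g
  rw [RingHom.mem_ker, pointIdeal_eq_comap, Ideal.mem_comap, ← Polynomial.ker_evalRingHom,
    RingHom.mem_ker]
  rfl

noncomputable def quotientPointIdealEquiv (a b : ℂ) : (ℂ[α,β] ⧸ pointIdeal a b) ≃ₐ[ℂ] ℂ :=
  (Ideal.quotientEquivAlgOfEq ℂ (ker_evalPoint a b).symm).trans <|
    Ideal.quotientKerAlgEquivOfSurjective fun z => ⟨C z, by simp [evalPoint]⟩

theorem embα_X_sub_C (a : ℂ) : embα (Polynomial.X - Polynomial.C a) = X 0 - C a := by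
  simp [embα]

theorem isCoprime_pointIdeal {a a' : ℂ} (h : a ≠ a') (b : ℂ) :
    IsCoprime (pointIdeal a b) (pointIdeal a' b) := by
  have hX := (Polynomial.isCoprime_X_sub_C_of_isUnit_sub (sub_ne_zero.2 h).isUnit).map
    (embα : ℂ[X] →+* ℂ[α,β])
  rw [RingHom.coe_coe, embα_X_sub_C, embα_X_sub_C, ← Ideal.isCoprime_span_singleton_iff,
    Ideal.isCoprime_iff_sup_eq] at hX
  rw [Ideal.isCoprime_iff_sup_eq, eq_top_iff, ← hX]
  exact sup_le_sup (Ideal.span_mono (by simp)) (Ideal.span_mono (by simp))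

theorem span_pair_eq_iInf_pointIdeal {ι : Type*} [Fintype ι] {a : ι → ℂ}
    (ha : Function.Injective a) {f : ℂ[α,β]}
    (hf : substβ b f = ∏ i, (Polynomial.X - Polynomial.C (a i))) :
    Ideal.span {f, X 1 - C b} = ⨅ i, pointIdeal (a i) b := by
  simp_rw [pointIdeal_eq_comap, ← Ideal.comap_iInf,
    Ideal.iInf_span_singleton fun i j hij => Polynomial.pairwise_coprime_X_sub_C ha hij, ← hf,
    Ideal.comap_span_singleton_apply (substβ_surjective b), ker_substβ, Ideal.span_insert]

end Specialization

namespace Rb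

-- Spelled as in `Mmod`, so that `Mmod r i` is `ℂ[α,β] ⧸ pointIdeal (α₀ r i) (β₀ r)` by definition.
noncomputable def β₀ (r : ℕ) : ℂ := if r % 2 = 0 then 8 else -8

noncomputable def α₀ (r : ℕ) (i : ℤ) : ℂ :=
  if r % 2 = 0 then 4 * (i : ℂ) * Complex.I else 4 * (i : ℂ)

theorem β₀_add_two (r : ℕ) : β₀ (r + 2) = β₀ r := by simp [β₀]

theorem α₀_add_two (r : ℕ) : α₀ (r + 2) = α₀ r := by ext; simp [α₀]

theorem neg_one_pow_succ_mul_eight (r : ℕ) : (-1 : ℂ) ^ (r + 1) * 8 = -β₀ r := by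
  rcases Nat.even_or_odd r with h | h
  · simp [β₀, Nat.even_iff.1 h, pow_succ, h.neg_one_pow]
  · simp [β₀, Nat.odd_iff.1 h, pow_succ, h.neg_one_pow]

theorem β₀_succ (r : ℕ) : β₀ (r + 1) = -β₀ r := by
  unfold β₀; split_ifs <;> norm_num <;> omega

theorem α₀_injective (r : ℕ) : Function.Injective (α₀ r) := by
  intro i j h
  unfold α₀ at h
  split_ifs at h <;> simpa [Complex.I_ne_zero] using h

theorem α₀_neg (r : ℕ) (i : ℤ) : α₀ r (-i) = -α₀ r i := by
  unfold α₀; split_ifs <;> push_cast <;> ring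

theorem α₀_sq (r : ℕ) (i : ℤ) : α₀ r i ^ 2 = -(2 * β₀ r * (i : ℂ) ^ 2) := by
  unfold α₀ β₀; split_ifs
  · linear_combination 16 * (i : ℂ) ^ 2 * Complex.I_sq
  · ring

theorem X_sub_C_α₀_mul (r : ℕ) (i : ℤ) :
    (Polynomial.X - Polynomial.C (α₀ r i)) * (Polynomial.X - Polynomial.C (α₀ r (-i))) =
      Polynomial.X ^ 2 + Polynomial.C (2 * β₀ r * (i : ℂ) ^ 2) := by
  have hC : Polynomial.C (α₀ r i) ^ 2 = -Polynomial.C (2 * β₀ r * (i : ℂ) ^ 2) := by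
    rw [← map_pow, α₀_sq, map_neg]
  rw [α₀_neg, map_neg]
  linear_combination -hC

theorem fst_zero : (Rb 0).1 = 1 := rfl

theorem snd_zero : (Rb 0).2 = 0 := rfl

theorem fst_succ (r : ℕ) : (Rb (r + 1)).1 = X 0 * (Rb r).1 + C ((r : ℂ) ^ 2) * (Rb r).2 := rfl

theorem snd_succ (r : ℕ) : (Rb (r + 1)).2 = (X 1 - C (β₀ r)) * (Rb r).1 := by
  rw [Rb, neg_one_pow_succ_mul_eight, map_neg, sub_eq_add_neg]

theorem fst_add_two (r : ℕ) : (Rb (r + 2)).1 =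
    X 0 * (Rb (r + 1)).1 + C (((r : ℂ) + 1) ^ 2) * ((X 1 - C (β₀ r)) * (Rb r).1) := by
  rw [fst_succ (r + 1), snd_succ]
  push_cast
  rfl

theorem Jb_succ (r : ℕ) :
    Jb (r + 1) = Ideal.span {(Rb (r + 1)).1, (X 1 - C (β₀ r)) * (Rb r).1} := by
  rw [Jb, snd_succ]

noncomputable def weights (r : ℕ) : Finset ℤ :=
  (Finset.Icc (-(r : ℤ)) r).filter fun i => i % 2 = (r : ℤ) % 2

theorem mem_weights {r : ℕ} {i : ℤ} :
    i ∈ weights r ↔ -(r : ℤ) ≤ i ∧ i ≤ r ∧ i % 2 = (r : ℤ) % 2 := by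
  simp [weights, and_assoc]

theorem weights_zero : weights 0 = {0} := by
  ext i; simp [mem_weights]; omega

theorem weights_one : weights 1 = {1, -1} := by
  ext i; simp [mem_weights]; omega

theorem weights_add_two (r : ℕ) :
    weights (r + 2) = insert ((r : ℤ) + 2) (insert (-((r : ℤ) + 2)) (weights r)) := by
  ext i; simp only [mem_weights, Finset.mem_insert]; push_cast; omega

theorem card_weights (r : ℕ) : (weights r).card = r + 1 := by
  induction r using Nat.twoStepInduction with
  | zero => rw [weights_zero]; rfl
  | one => rw [weights_one]; rfl
  | more r ih _ =>
    rw [weights_add_two, Finset.card_insert_of_notMem, Finset.card_insert_of_notMem, ih] <;>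
      simp only [Finset.mem_insert, mem_weights] <;> omega

theorem substβ_fst_add_three (r : ℕ) : substβ (β₀ r) (Rb (r + 3)).1 =
    (Polynomial.X ^ 2 + Polynomial.C (2 * β₀ r * ((r : ℂ) + 2) ^ 2)) *
      substβ (β₀ r) (Rb (r + 1)).1 := by
  rw [fst_add_two (r + 1), fst_add_two r]
  simp only [map_add, map_mul, map_sub, map_pow, map_neg, map_one, map_ofNat, map_natCast,
    substβ_X_zero, substβ_X_one, substβ_C, β₀_succ, sub_self, zero_mul, mul_zero, add_zero]
  push_cast
  ring

theorem substβ_fst_succ (r : ℕ) :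
    substβ (β₀ r) (Rb (r + 1)).1 = ∏ i ∈ weights r, (Polynomial.X - Polynomial.C (α₀ r i)) := by
  induction r using Nat.twoStepInduction with
  | zero => simp [weights_zero, α₀, Rb]
  | one =>
    rw [fst_add_two, weights_one, Finset.prod_pair (by norm_num), X_sub_C_α₀_mul,
      β₀_succ 0]
    simp only [map_add, map_mul, map_sub, map_pow, map_neg, map_one, map_zero, map_ofNat,
      substβ_X_zero, substβ_X_one, substβ_C, fst_succ, fst_zero, snd_zero, Nat.cast_zero,
      Int.cast_one]
    ring
  | more r ih _ =>
    rw [β₀_add_two, α₀_add_two, substβ_fst_add_three, ih, weights_add_two,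
      Finset.prod_insert (by simp only [Finset.mem_insert, mem_weights]; omega),
      Finset.prod_insert (by simp only [mem_weights]; omega), ← mul_assoc, X_sub_C_α₀_mul]
    push_cast
    rfl

theorem X_one_sub_C_not_dvd_fst_succ (r : ℕ) : ¬ (X 1 - C (β₀ r)) ∣ (Rb (r + 1)).1 := by
  rintro ⟨g, hg⟩
  have h := congrArg (substβ (β₀ r)) hg
  rw [substβ_fst_succ, map_mul, map_sub, substβ_X_one, substβ_C, sub_self, zero_mul] at h
  exact Finset.prod_ne_zero_iff.2 (fun i _ => Polynomial.X_sub_C_ne_zero _) h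

theorem isRelPrime_fst_succ (r : ℕ) : IsRelPrime (Rb (r + 1)).1 (Rb r).1 := by
  induction r with
  | zero => exact isRelPrime_one_right
  | succ r ih =>
    have hu : IsUnit (C (((r : ℂ) + 1) ^ 2) : ℂ[α,β]) :=
      (IsUnit.mk0 _ (pow_ne_zero 2 (Nat.cast_add_one_ne_zero r))).map C
    rw [fst_add_two]
    refine IsRelPrime.mul_add_right_left ?_ _
    rw [isRelPrime_mul_unit_left_left hu]
    exact IsRelPrime.mul_left ((prime_X_one_sub_C _).irreducible.isRelPrime_iff_not_dvd.2
      (X_one_sub_C_not_dvd_fst_succ r)) ih.symm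

theorem fst_mem_Jb (r : ℕ) : (Rb r).1 ∈ Jb r := Ideal.subset_span (Set.mem_insert _ _)

theorem snd_mem_span_fst (r : ℕ) : (Rb r).2 ∈ Ideal.span {(Rb r).1, (Rb (r + 1)).1} := by
  cases r with
  | zero => exact zero_mem _
  | succ r =>
    have hu : ((r : ℂ) + 1) ^ 2 ≠ 0 := pow_ne_zero 2 (Nat.cast_add_one_ne_zero r)
    have hCu : C (((r : ℂ) + 1) ^ 2)⁻¹ * C (((r : ℂ) + 1) ^ 2) = (1 : ℂ[α,β]) := by
      rw [← map_mul, inv_mul_cancel₀ hu, map_one]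
    rw [snd_succ, Ideal.mem_span_pair]
    refine ⟨-C (((r : ℂ) + 1) ^ 2)⁻¹ * X 0, C (((r : ℂ) + 1) ^ 2)⁻¹, ?_⟩
    rw [fst_add_two]
    linear_combination (X 1 - C (β₀ r)) * (Rb r).1 * hCu

theorem map_Jb_eq_span (r : ℕ) :
    (Jb r).map (Ideal.Quotient.mk (Jb (r + 1))) =
      Ideal.span {Ideal.Quotient.mk (Jb (r + 1)) (Rb r).1} := by
  set J := Ideal.span {Ideal.Quotient.mk (Jb (r + 1)) (Rb r).1}
  refine le_antisymm ?_ (Ideal.span_le.2 ?_)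
  · have hfst : (Rb r).1 ∈ J.comap (Ideal.Quotient.mk _) := Ideal.subset_span rfl
    have hfst_succ : (Rb (r + 1)).1 ∈ J.comap (Ideal.Quotient.mk _) := by
      rw [Ideal.mem_comap, Ideal.Quotient.eq_zero_iff_mem.2 (fst_mem_Jb _)]
      exact zero_mem _
    have hsnd : (Rb r).2 ∈ J.comap (Ideal.Quotient.mk _) := by
      refine Ideal.span_le.2 ?_ (snd_mem_span_fst r)
      rintro _ (rfl | rfl)
      exacts [hfst, hfst_succ]
    rw [Ideal.map_le_iff_le_comap, Jb, Ideal.span_le]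
    rintro _ (rfl | rfl)
    exacts [hfst, hsnd]
  · rw [Set.singleton_subset_iff]
    exact Ideal.mem_map_of_mem _ (fst_mem_Jb r)

theorem JbQuot_eq_span (r : ℕ) :
    JbQuot r = ℂ[α,β] ∙ Ideal.Quotient.mk (Jb (r + 1)) (Rb r).1 := by
  rw [JbQuot, map_Jb_eq_span, Ideal.span, Submodule.restrictScalars_span _ _
    Ideal.Quotient.mk_surjective]

theorem torsionOf_mk_fst (r : ℕ) :
    Ideal.torsionOf ℂ[α,β] _ (Ideal.Quotient.mk (Jb (r + 1)) (Rb r).1) =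
      Ideal.span {(Rb (r + 1)).1, X 1 - C (β₀ r)} := by
  ext a
  rw [Ideal.mem_torsionOf_iff]
  change Ideal.Quotient.mk _ (a * (Rb r).1) = 0 ↔ _
  rw [Ideal.Quotient.eq_zero_iff_mem, Jb_succ, mul_mem_span_pair_mul_iff (isRelPrime_fst_succ r)]

abbrev Weight (r : ℕ) := {i : ℤ // -(r : ℤ) ≤ i ∧ i ≤ r ∧ i % 2 = (r : ℤ) % 2}

noncomputable instance (r : ℕ) : Fintype (Weight r) :=
  Fintype.ofFinset (weights r) fun _ => mem_weights

theorem card_weight (r : ℕ) : Fintype.card (Weight r) = r + 1 := by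
  rw [← card_weights]; exact Fintype.card_ofFinset _ _

theorem torsionOf_mk_fst_eq_iInf (r : ℕ) :
    Ideal.torsionOf ℂ[α,β] _ (Ideal.Quotient.mk (Jb (r + 1)) (Rb r).1) =
      ⨅ i : Weight r, pointIdeal (α₀ r i) (β₀ r) := by
  rw [torsionOf_mk_fst]
  refine span_pair_eq_iInf_pointIdeal ((α₀_injective r).comp Subtype.val_injective) ?_
  rw [substβ_fst_succ, Finset.prod_subtype (weights r) fun _ => mem_weights]
  rfl

noncomputable def quotEquiv (r : ℕ) : JbQuot r ≃ₗ[ℂ[α,β]] ⨁ i : Weight r, Mmod r i :=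
  LinearEquiv.ofEq _ _ (JbQuot_eq_span r) ≪≫ₗ
    (Ideal.quotTorsionOfEquivSpanSingleton _ _ _).symm ≪≫ₗ
    Submodule.quotEquivOfEq _ _ (torsionOf_mk_fst_eq_iInf r) ≪≫ₗ
    Ideal.quotientInfLinearEquivPiQuotient _ (fun _ _ hij =>
      isCoprime_pointIdeal ((α₀_injective r).ne (Subtype.val_injective.ne hij)) _) ≪≫ₗ
    (DirectSum.linearEquivFunOnFintype _ _ fun i : Weight r => Mmod r i).symm

noncomputable def mmodEquiv (r : ℕ) (i : ℤ) : Mmod r i ≃ₐ[ℂ] ℂ :=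
  quotientPointIdealEquiv (α₀ r i) (β₀ r)

end Rb

/-- For every r ≥ 0, as a ℂ[α,β]-module the quotient J̄_r/J̄_{r+1} is isomorphic to the direct
sum ⊕_i M_{r+1,i}, where i ranges over the integers with −r ≤ i ≤ r and i ≡ r (mod 2). In
particular each M_{r+1,i} is one-dimensional over ℂ and dim_ℂ (J̄_r/J̄_{r+1}) = r + 1. -/
theorem stmt8 (r : ℕ) :
    Nonempty ((JbQuot r) ≃ₗ[MvPolynomial (Fin 2) ℂ]
      (⨁ i : {i : ℤ // -(r : ℤ) ≤ i ∧ i ≤ r ∧ i % 2 = (r : ℤ) % 2}, Mmod r i)) ∧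
    (∀ i : {i : ℤ // -(r : ℤ) ≤ i ∧ i ≤ r ∧ i % 2 = (r : ℤ) % 2},
      Module.finrank ℂ (Mmod r i) = 1) ∧
    Module.finrank ℂ (JbQuot r) = r + 1 := by
  refine ⟨⟨Rb.quotEquiv r⟩, fun i => ?_, ?_⟩
  · rw [(Rb.mmodEquiv r i).toLinearEquiv.finrank_eq, Module.finrank_self]
  · rw [((Rb.quotEquiv r).restrictScalars ℂ ≪≫ₗ DirectSum.linearEquivFunOnFintype ℂ _ _ ≪≫ₗ
      LinearEquiv.piCongrRight fun i => (Rb.mmodEquiv r i).toLinearEquiv).finrank_eq,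
      Module.finrank_fintype_fun_eq_card, Rb.card_weight]
end
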